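/- Any reflection subgroup of a dihedral reflection subgroup ⟨r_a, r_b⟩ of W, where (a,b) ≤ -1, has at most 2 canonical generators. -/

import Mathlib

open Real

variable {V : Type*} [AddCommGroup V] [Module ℝ V]

/-- The set of positive linear combinations of a set `A`. -/
def PLC (A : Set V) : Set V :=
  {v | ∃ (s : Finset V) (c : V → ℝ), (↑s : Set V) ⊆ A ∧ (∀ x ∈ s, 0 ≤ c x) ∧
    (∃ x ∈ s, 0 < c x) ∧ v = ∑ x ∈ s, c x • x}

/-- A Coxeter datum (Krammer): a root basis `Pi` in `V` with bilinear form `B`. -/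
structure CoxeterDatum (V : Type*) [AddCommGroup V] [Module ℝ V] where
  B : LinearMap.BilinForm ℝ V
  Pi : Set V
  norm_one : ∀ a ∈ Pi, B a a = 1
  symm : ∀ a ∈ Pi, ∀ b ∈ Pi, B a b = B b a
  offdiag : ∀ a ∈ Pi, ∀ b ∈ Pi, a ≠ b →
    (∃ m : ℕ, 2 ≤ m ∧ B a b = -Real.cos (Real.pi / m)) ∨ B a b ≤ -1
  zero_not_plc : (0 : V) ∉ PLC Pi

namespace CoxeterDatum

variable (D : CoxeterDatum V)

/-- The reflection in the vector `a`, as a linear endomorphism of `V`. -/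
noncomputable def refl (a : V) : Module.End ℝ V where
  toFun x := x - (2 * D.B x a) • a
  map_add' x y := by simp only [map_add, LinearMap.add_apply]; module
  map_smul' c x := by simp only [map_smul, LinearMap.smul_apply, smul_eq_mul,
    RingHom.id_apply]; module

/-- The set of simple reflections, as invertible endomorphisms of `V`. -/
def simples : Set (Module.End ℝ V)ˣ :=
  {u | ∃ a ∈ D.Pi, (u : Module.End ℝ V) = D.refl a}

/-- The Coxeter group `W`, realized as the group generated by the simple reflections. -/
noncomputable def Wgrp : Subgroup (Module.End ℝ V)ˣ := Subgroup.closure D.simples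

/-- The root system. -/
def roots : Set V :=
  {x | ∃ w ∈ D.Wgrp, ∃ a ∈ D.Pi, x = (w : Module.End ℝ V) a}

/-- The positive roots. -/
def posRoots : Set V := D.roots ∩ PLC D.Pi

/-- The negative roots. -/
def negRoots : Set V := {x | -x ∈ D.posRoots}

/-- The length of an element of `W` with respect to the simple reflections. -/
noncomputable def len (w : (Module.End ℝ V)ˣ) : ℕ :=
  sInf {n | ∃ l : List (Module.End ℝ V)ˣ,
    l.length = n ∧ (∀ u ∈ l, u ∈ D.simples) ∧ l.prod = w}

/-- The depth of a root. -/
noncomputable def dp (x : V) : ℕ :=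
  sInf {n | ∃ w ∈ D.Wgrp, D.len w = n ∧ (w : Module.End ℝ V) x ∈ D.negRoots}

/-- Dominance: `x` dominates `y` if every `w ∈ W` making `x` negative makes `y` negative. -/
def dom (x y : V) : Prop :=
  ∀ w ∈ D.Wgrp, (w : Module.End ℝ V) x ∈ D.negRoots → (w : Module.End ℝ V) y ∈ D.negRoots

/-- `D(x)`: the set of positive roots other than `x` dominated by `x`. -/
def DSet (x : V) : Set V := {y | y ∈ D.posRoots ∧ y ≠ x ∧ D.dom x y}

/-- `D_n`: the set of positive roots dominating exactly `n` other positive roots. -/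
def Dn (n : ℕ) : Set V :=
  {x | x ∈ D.posRoots ∧ (D.DSet x).Finite ∧ (D.DSet x).ncard = n}

/-- The set of reflections of `W`. -/
def TSet : Set (Module.End ℝ V)ˣ :=
  {t | ∃ w ∈ D.Wgrp, ∃ s ∈ D.simples, t = w * s * w⁻¹}

/-- `N(w)`: the set of positive roots sent to negative roots by `w`. -/
def NSet (w : (Module.End ℝ V)ˣ) : Set V :=
  {z | z ∈ D.posRoots ∧ (w : Module.End ℝ V) z ∈ D.negRoots}

/-- `N̄(w)`: the reflections `t` with `ℓ(wt) < ℓ(w)`. -/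
def Nbar (w : (Module.End ℝ V)ˣ) : Set (Module.End ℝ V)ˣ :=
  {t | t ∈ D.TSet ∧ D.len (w * t) < D.len w}

/-- The canonical generators of a reflection subgroup `W'`. -/
def canGens (W' : Subgroup (Module.End ℝ V)ˣ) : Set (Module.End ℝ V)ˣ :=
  {t | t ∈ D.TSet ∧ D.Nbar t ∩ (W' : Set (Module.End ℝ V)ˣ) = {t}}

/-- `S(x)`: elements of `W` of minimal length sending `x` into `Π` (inverse-wise). -/
def SSet (x : V) : Set (Module.End ℝ V)ˣ :=
  {w | w ∈ D.Wgrp ∧ D.len w = D.dp x - 1 ∧ ((w⁻¹ : (Module.End ℝ V)ˣ) : Module.End ℝ V) x ∈ D.Pi}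

end CoxeterDatum

/-!
Every canonical generator `t` of `W'` is the reflection `r_γ` in a positive root `γ`. Every element
of `⟨r_a, r_b⟩` moves vectors only within the plane `P = span {a, b}`, so `γ ∈ P`. For distinct
canonical generators `r_γ, r_γ'` we have `r_γ' ∉ N̄(r_γ)`, so by the exchange condition `r_γ γ'` is
again a positive root, and so is `r_γ' γ`; together with `(γ, γ')² ≥ 1`, which holds in `P`
because `(a, b) ≤ -1`, this forces `(γ, γ') ≤ -1`. Three unit vectors with pairwise products
`≤ -1` have a Gram matrix of negative determinant, so they cannot all lie in the plane `P`.

The exchange condition rests on every root being positive or negative, which is proved as in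
Humphreys: if `ℓ(w s_α) ≥ ℓ(w)` and `s_β` is a descent of `w`, write `w = v x` with `x` a longest
alternating word in `s_α, s_β` ending in `s_β` such that the lengths add up. Then neither `s_α`
nor `s_β` is a descent of `v`, and `x α` is a nonnegative combination of `α` and `β` whose
coefficients are Chebyshev values `U_k(c)`, where `(α, β) = -c`.
-/

namespace PLC

variable {A : Set V} {u v : V}

theorem mem_iff_finsupp : v ∈ PLC A ↔ ∃ f : V →₀ ℝ, ↑f.support ⊆ A ∧ 0 ≤ f ∧ f ≠ 0 ∧
    Finsupp.linearCombination ℝ id f = v := by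
  constructor
  · rintro ⟨s, c, hsA, hc, ⟨x, hxs, hx⟩, rfl⟩
    refine ⟨Finsupp.indicator s fun y _ => c y,
      (Finset.coe_subset.2 (Finsupp.support_indicator_subset _ _)).trans hsA, fun y => ?_,
      fun h => ?_, ?_⟩
    · by_cases hy : y ∈ s
      · simpa [Finsupp.indicator_of_mem hy] using hc y hy
      · simp [Finsupp.indicator_of_notMem hy]
    · have := DFunLike.congr_fun h x
      rw [Finsupp.indicator_of_mem hxs] at this
      exact hx.ne' this
    · rw [Finsupp.linearCombination_apply,
        Finsupp.sum_of_support_subset _ (Finsupp.support_indicator_subset _ _) _ (by simp)]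
      exact Finset.sum_congr rfl fun y hy => by rw [Finsupp.indicator_of_mem hy, id]
  · rintro ⟨f, hfA, hf, hf0, rfl⟩
    obtain ⟨x, hx⟩ := Finsupp.ne_iff.1 hf0
    exact ⟨f.support, f, hfA, fun y _ => hf y, ⟨x, Finsupp.mem_support_iff.2 hx,
      lt_of_le_of_ne (hf x) (Ne.symm hx)⟩, Finsupp.linearCombination_apply _ _⟩

theorem of_mem (hv : v ∈ A) : v ∈ PLC A :=
  mem_iff_finsupp.2 ⟨Finsupp.single v 1, by simpa using hv, by simp [Finsupp.single_nonneg],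
    by simp, by simp⟩

theorem add (hu : u ∈ PLC A) (hv : v ∈ PLC A) : u + v ∈ PLC A := by
  obtain ⟨f, hfA, hf, hf0, rfl⟩ := mem_iff_finsupp.1 hu
  obtain ⟨g, hgA, hg, -, rfl⟩ := mem_iff_finsupp.1 hv
  classical
  refine mem_iff_finsupp.2 ⟨f + g, ?_, add_nonneg hf hg,
    fun h => hf0 ((add_eq_zero_iff_of_nonneg hf hg).1 h).1, map_add _ _ _⟩
  exact (Finset.coe_subset.2 Finsupp.support_add).trans (by simp [hfA, hgA])

theorem smul {r : ℝ} (hr : 0 < r) (hv : v ∈ PLC A) : r • v ∈ PLC A := by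
  obtain ⟨f, hfA, hf, hf0, rfl⟩ := mem_iff_finsupp.1 hv
  exact mem_iff_finsupp.2 ⟨r • f, by rwa [Finsupp.support_smul_eq hr.ne'],
    smul_nonneg hr.le hf, smul_ne_zero hr.ne' hf0, map_smul _ _ _⟩

theorem smul_add_smul {r s : ℝ} (hu : u ∈ PLC A) (hv : v ∈ PLC A) (hr : 0 ≤ r) (hs : 0 ≤ s)
    (hrs : 0 < r ∨ 0 < s) : r • u + s • v ∈ PLC A := by
  rcases hr.eq_or_lt with rfl | hr
  · simpa using smul (hrs.resolve_left (lt_irrefl 0)) hv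
  rcases hs.eq_or_lt with rfl | hs
  · simpa using smul hr hu
  exact add (smul hr hu) (smul hs hv)

end PLC

theorem Finsupp.erase_nonneg {ι M : Type*} [Zero M] [Preorder M] {f : ι →₀ M} (hf : 0 ≤ f)
    (a : ι) : 0 ≤ f.erase a :=
  fun x => by
    classical
    rw [Finsupp.erase_apply]
    split_ifs
    exacts [le_rfl, hf x]

theorem Module.End.units_apply_inv_apply {R M : Type*} [Semiring R] [AddCommMonoid M]
    [Module R M] (w : (Module.End R M)ˣ) (x : M) :
    (w : Module.End R M) (((w⁻¹ : (Module.End R M)ˣ) : Module.End R M) x) = x := by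
  rw [← Module.End.mul_apply, ← Units.val_mul, mul_inv_cancel, Units.val_one,
    Module.End.one_apply]

theorem apply_sub_mem_of_mem_closure {R M : Type*} [Ring R] [AddCommGroup M] [Module R M]
    {P : Submodule R M} {S : Set (Module.End R M)ˣ}
    (hS : ∀ s ∈ S, ∀ x, (s : Module.End R M) x - x ∈ P) {g : (Module.End R M)ˣ}
    (hg : g ∈ Subgroup.closure S) (x : M) : (g : Module.End R M) x - x ∈ P := by
  induction hg using Subgroup.closure_induction generalizing x with
  | mem s hs => exact hS s hs x
  | one => simp
  | mul g h _ _ hg hh =>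
    rw [Units.val_mul, Module.End.mul_apply, ← sub_add_sub_cancel _ ((h : Module.End R M) x)]
    exact P.add_mem (hg _) (hh x)
  | inv g _ hg =>
    have := P.neg_mem (hg (((g⁻¹ : (Module.End R M)ˣ) : Module.End R M) x))
    rwa [neg_sub, Module.End.units_apply_inv_apply] at this

theorem Set.finite_and_ncard_le_two_of_forall_not_injective {α : Type*} {s : Set α}
    (h : ∀ f : Fin 3 → α, (∀ i, f i ∈ s) → ¬ Function.Injective f) :
    s.Finite ∧ s.ncard ≤ 2 := by
  suffices hs : s.encard ≤ 2 by
    have hfin := Set.finite_of_encard_le_coe hs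
    refine ⟨hfin, ?_⟩
    rw [← hfin.cast_ncard_eq] at hs
    exact_mod_cast hs
  by_contra! hs
  obtain ⟨t, hts, ht⟩ := Set.exists_subset_encard_eq (Order.add_one_le_of_lt hs)
  obtain ⟨x, y, z, hxy, hxz, hyz, rfl⟩ := Set.encard_eq_three.1 ht
  refine h ![x, y, z] (fun i => hts ?_) fun i j hij => ?_
  · fin_cases i <;> simp
  · fin_cases i <;> fin_cases j <;> simp_all [eq_comm]

theorem LinearMap.BilinForm.eq_one_of_apply_eq_self {B : LinearMap.BilinForm ℝ V}
    {f : Module.End ℝ V} {α β : V} {c : ℝ} (hαα : B α α = 1) (hββ : B β β = 1)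
    (hαβ : B α β = -c) (hβα : B β α = -c) (hc : c ^ 2 ≠ 1) (hfα : f α = α) (hfβ : f β = β)
    (hf : ∀ v, B v α = 0 → B v β = 0 → f v = v) : f = 1 := by
  ext v
  have hc' : 1 - c ^ 2 ≠ 0 := sub_ne_zero.2 (Ne.symm hc)
  -- `p` is `B`-orthogonal to `α, β`: its coefficients invert the Gram matrix `!![1, -c; -c, 1]`
  set x := B v α
  set y := B v β
  set p := v - ((x + c * y) / (1 - c ^ 2)) • α - ((y + c * x) / (1 - c ^ 2)) • β
  have hp : f p = p := by
    apply hf <;> simp only [p, map_sub, map_smul, LinearMap.sub_apply, LinearMap.smul_apply,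
      smul_eq_mul, hαα, hββ, hαβ, hβα] <;> field_simp <;> ring
  have hv : v = p + ((x + c * y) / (1 - c ^ 2)) • α + ((y + c * x) / (1 - c ^ 2)) • β := by
    simp only [p]; abel
  rw [Module.End.one_apply, hv, map_add, map_add, map_smul, map_smul, hp, hfα, hfβ]

theorem LinearMap.BilinForm.linearIndependent_of_le_neg_one {B : LinearMap.BilinForm ℝ V}
    {v : Fin 3 → V} (hdiag : ∀ i, B (v i) (v i) = 1) (hoff : ∀ i j, i ≠ j → B (v i) (v j) ≤ -1) :
    LinearIndependent ℝ v := by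
  rw [Fintype.linearIndependent_iff]
  intro g hg
  -- the Gram matrix `G` kills `g`, but its determinant is negative
  set G : Matrix (Fin 3) (Fin 3) ℝ := Matrix.of fun i j => B (v i) (v j)
  have hGg : G.mulVec g = 0 := by
    ext i
    have h : B (v i) (∑ j, g j • v j) = 0 := by rw [hg, map_zero]
    simpa [G, Matrix.mulVec, dotProduct, map_sum, mul_comm] using h
  have h2 : ∀ x y : ℝ, x ≤ -1 → y ≤ -1 → 1 ≤ x * y := fun x y hx hy => by nlinarith
  have h3 : ∀ x y z : ℝ, x ≤ -1 → y ≤ -1 → z ≤ -1 → x * y * z ≤ -1 := fun x y z hx hy hz => by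
    nlinarith [mul_le_mul_of_nonneg_left (h2 x y hx hy) (show 0 ≤ -z by linarith)]
  have hdet : G.det < 0 := by
    have h01 := hoff 0 1 (by decide)
    have h02 := hoff 0 2 (by decide)
    have h10 := hoff 1 0 (by decide)
    have h12 := hoff 1 2 (by decide)
    have h20 := hoff 2 0 (by decide)
    have h21 := hoff 2 1 (by decide)
    rw [Matrix.det_fin_three]
    simp only [G, Matrix.of_apply, hdiag]
    linarith [h2 _ _ h12 h21, h2 _ _ h01 h10, h2 _ _ h02 h20, h3 _ _ _ h01 h12 h20,
      h3 _ _ _ h02 h10 h21]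
  exact congrFun (Matrix.eq_zero_of_mulVec_eq_zero hdet.ne hGg)

theorem not_linearIndependent_of_mem_span_pair {K M : Type*} [Field K] [AddCommGroup M]
    [Module K M] {a b : M} {v : Fin 3 → M} (hv : ∀ i, v i ∈ Submodule.span K {a, b}) :
    ¬ LinearIndependent K v := fun hli => by
  classical
  have := FiniteDimensional.span_of_finite K (Set.toFinite {a, b})
  have h3 := finrank_span_eq_card hli
  have hle := Submodule.finrank_mono (Submodule.span_le.2 (Set.range_subset_iff.2 hv))
  have h2 : Module.finrank K (Submodule.span K ({a, b} : Set M)) ≤ 2 :=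
    (finrank_span_le_card _).trans (by simpa using Finset.card_le_two)
  simp only [Fintype.card_fin] at h3
  omega

theorem LinearMap.BilinForm.one_le_sq_of_mem_span_pair {B : LinearMap.BilinForm ℝ V}
    {a b x y : V} (haa : B a a = 1) (hbb : B b b = 1) (hba : B b a = B a b) (hab : B a b ≤ -1)
    (hx : x ∈ Submodule.span ℝ {a, b}) (hy : y ∈ Submodule.span ℝ {a, b}) (hxx : B x x = 1)
    (hyy : B y y = 1) : 1 ≤ B x y ^ 2 := by
  obtain ⟨p, q, rfl⟩ := Submodule.mem_span_pair.1 hx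
  obtain ⟨p', q', rfl⟩ := Submodule.mem_span_pair.1 hy
  simp only [map_add, map_smul, LinearMap.add_apply, LinearMap.smul_apply, smul_eq_mul, haa, hbb,
    hba] at hxx hyy ⊢
  have hc : 0 ≤ B a b ^ 2 - 1 := by nlinarith
  -- `B x y ^ 2 - B x x * B y y = (B a b ^ 2 - 1) * (p * q' - q * p') ^ 2`
  nlinarith [mul_nonneg hc (sq_nonneg (p * q' - q * p'))]

/-! ### Alternating words and Chebyshev polynomials -/

namespace CoxeterSystem

theorem mem_alternatingWord {B : Type*} {s t u : B} {k : ℕ} (hu : u ∈ alternatingWord s t k) :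
    u = s ∨ u = t := by
  induction k with
  | zero => simp [alternatingWord] at hu
  | succ k ih =>
    rw [alternatingWord_succ', List.mem_cons] at hu
    rcases hu with rfl | hu
    · split_ifs <;> simp
    · exact ih hu

variable {G : Type*} [Group G]

theorem prod_alternatingWord_two_mul (s t : G) (j : ℕ) :
    (alternatingWord s t (2 * j)).prod = (s * t) ^ j := by
  induction j with
  | zero => simp [alternatingWord]
  | succ j ih =>
    rw [show 2 * (j + 1) = 2 * j + 1 + 1 by ring, alternatingWord_succ', alternatingWord_succ',
      if_neg (by simp [parity_simps]), if_pos (by simp), List.prod_cons, List.prod_cons, ih,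
      pow_succ', mul_assoc]

theorem prod_alternatingWord_two_mul_add_one (s t : G) (j : ℕ) :
    (alternatingWord s t (2 * j + 1)).prod = t * (s * t) ^ j := by
  rw [alternatingWord_succ', if_pos (by simp), List.prod_cons, prod_alternatingWord_two_mul]

theorem exists_shorter_alternatingWord {s t : G} (hs : s * s = 1) (ht : t * t = 1) {m k : ℕ}
    (hm : (s * t) ^ m = 1) (hm0 : 0 < m) (hmk : m < k) :
    ∃ y : List G, (∀ u ∈ y, u = s ∨ u = t) ∧ y.prod = (alternatingWord s t k).prod ∧
      y.length + 2 ≤ k := by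
  have hts : t * s = (s * t)⁻¹ := by
    rw [mul_inv_rev, inv_eq_of_mul_eq_one_right hs, inv_eq_of_mul_eq_one_right ht]
  have hst : ∀ j, m ≤ j → (s * t) ^ j = (s * t) ^ (j - m) := fun j h => by
    rw [← mul_one ((s * t) ^ (j - m)), ← hm, ← pow_add, Nat.sub_add_cancel h]
  have hts' : ∀ j, j ≤ m → (t * s) ^ (m - j) = (s * t) ^ j := fun j h => by
    rw [hts, inv_pow, inv_eq_iff_mul_eq_one, ← pow_add, Nat.sub_add_cancel h, hm]
  have memst : ∀ n, ∀ u ∈ alternatingWord s t n, u = s ∨ u = t := fun _ _ => mem_alternatingWord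
  have memts : ∀ n, ∀ u ∈ alternatingWord t s n, u = s ∨ u = t := fun _ _ hu =>
    (mem_alternatingWord hu).symm
  obtain ⟨j, rfl | rfl⟩ := Nat.even_or_odd' k
  · rw [prod_alternatingWord_two_mul]
    rcases le_or_gt m j with hj | hj
    · exact ⟨_, memst (2 * (j - m)), by rw [prod_alternatingWord_two_mul, hst j hj],
        by rw [length_alternatingWord]; omega⟩
    · exact ⟨_, memts (2 * (m - j)), by rw [prod_alternatingWord_two_mul, hts' j hj.le],
        by rw [length_alternatingWord]; omega⟩
  · rw [prod_alternatingWord_two_mul_add_one]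
    rcases le_or_gt m j with hj | hj
    · exact ⟨_, memst (2 * (j - m) + 1), by rw [prod_alternatingWord_two_mul_add_one, hst j hj],
        by rw [length_alternatingWord]; omega⟩
    · refine ⟨_, memts (2 * (m - (j + 1)) + 1), ?_, by rw [length_alternatingWord]; omega⟩
      rw [prod_alternatingWord_two_mul_add_one, hts' (j + 1) hj, pow_succ', ← mul_assoc,
        ← mul_assoc, hs, one_mul]

end CoxeterSystem

section Chebyshev

open Polynomial.Chebyshev

/-- `chebU c k = U_{k-1}(c)`: the shift makes `chebU (cos θ) k * sin θ = sin (k * θ)`. -/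
noncomputable def chebU (c : ℝ) (k : ℕ) : ℝ := (U ℝ ((k : ℤ) - 1)).eval c

@[simp] theorem chebU_zero (c : ℝ) : chebU c 0 = 0 := by simp [chebU]

@[simp] theorem chebU_one (c : ℝ) : chebU c 1 = 1 := by simp [chebU]

theorem chebU_add_two (c : ℝ) (k : ℕ) :
    chebU c (k + 2) = 2 * c * chebU c (k + 1) - chebU c k := by
  simp only [chebU, Nat.cast_add, Nat.cast_ofNat, Nat.cast_one]
  rw [show (k : ℤ) + 2 - 1 = (k - 1) + 2 by ring, U_add_two,
    show (k : ℤ) + 1 - 1 = k - 1 + 1 by ring]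
  simp

theorem chebU_cos_mul_sin (θ : ℝ) (k : ℕ) : chebU (cos θ) k * sin θ = sin (k * θ) := by
  rw [chebU, U_real_cos]
  push_cast
  ring_nf

theorem one_le_chebU {c : ℝ} (hc : 1 ≤ c) {k : ℕ} (hk : 1 ≤ k) : 1 ≤ chebU c k := by
  suffices ∀ k, 1 ≤ chebU c (k + 1) ∧ chebU c k ≤ chebU c (k + 1) by
    obtain ⟨k, rfl⟩ := Nat.exists_eq_add_of_le' hk
    exact (this k).1
  intro k
  induction k with
  | zero => simp
  | succ k ih =>
    rw [chebU_add_two]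
    constructor <;> nlinarith [ih.1, ih.2]

theorem sin_pi_div_pos {m : ℕ} (hm : 2 ≤ m) : 0 < sin (π / m) :=
  sin_pos_of_pos_of_lt_pi (div_pos pi_pos (by positivity))
    (div_lt_self pi_pos (by exact_mod_cast hm))

theorem chebU_cos_pi_div_pos {m k : ℕ} (hk : 0 < k) (hkm : k < m) :
    0 < chebU (cos (π / m)) k := by
  have hm : (0 : ℝ) < m := by exact_mod_cast hk.trans hkm
  have hkm' : (k : ℝ) < m := by exact_mod_cast hkm
  refine (mul_pos_iff_of_pos_right (sin_pi_div_pos (m := m) (by omega))).1 ?_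
  rw [chebU_cos_mul_sin]
  apply sin_pos_of_pos_of_lt_pi (by positivity)
  calc (k : ℝ) * (π / m) < m * (π / m) := by gcongr
    _ = π := by field_simp

theorem chebU_cos_pi_div_nonneg {m k : ℕ} (hm : 2 ≤ m) (hkm : k ≤ m) :
    0 ≤ chebU (cos (π / m)) k := by
  have hm' : (0 : ℝ) < m := by positivity
  have hkm' : (k : ℝ) ≤ m := by exact_mod_cast hkm
  refine (mul_nonneg_iff_of_pos_right (sin_pi_div_pos hm)).1 ?_
  rw [chebU_cos_mul_sin]
  apply sin_nonneg_of_nonneg_of_le_pi (by positivity)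
  calc (k : ℝ) * (π / m) ≤ m * (π / m) := by gcongr
    _ = π := by field_simp

theorem chebU_cos_pi_div_two_mul {m : ℕ} (hm : 2 ≤ m) :
    chebU (cos (π / m)) (2 * m) = 0 ∧ chebU (cos (π / m)) (2 * m + 1) = 1 := by
  have hsin := (sin_pi_div_pos hm).ne'
  have hm' : (m : ℝ) ≠ 0 := by positivity
  constructor
  · refine (mul_eq_zero_iff_right hsin).1 ?_
    rw [chebU_cos_mul_sin,
      show ((2 * m : ℕ) : ℝ) * (π / m) = (2 : ℕ) * π by field_simp; push_cast; ring, sin_nat_mul_pi]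
  · refine mul_right_cancel₀ hsin ?_
    rw [chebU_cos_mul_sin, one_mul,
      show ((2 * m + 1 : ℕ) : ℝ) * (π / m) = π / m + (1 : ℕ) * (2 * π) by
        field_simp; push_cast; ring,
      sin_add_nat_mul_two_pi]

end Chebyshev

namespace CoxeterDatum

open CoxeterSystem

variable (D : CoxeterDatum V)

/-! ### Reflections, the invariant form and the length function -/

theorem neg_notMem_PLC {u : V} (hu : u ∈ PLC D.Pi) : -u ∉ PLC D.Pi := fun h =>
  D.zero_not_plc (by simpa using PLC.add hu h)

theorem notMem_negRoots {x : V} (hx : x ∈ D.posRoots) : x ∉ D.negRoots := fun h =>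
  D.neg_notMem_PLC hx.2 h.2

theorem refl_apply (a x : V) : D.refl a x = x - (2 * D.B x a) • a := rfl

theorem refl_neg (a : V) : D.refl (-a) = D.refl a := by
  ext x
  simp only [refl_apply, map_neg, smul_neg, neg_smul, mul_neg, neg_neg]

theorem refl_self {a : V} (h : D.B a a = 1) : D.refl a a = -a := by
  rw [refl_apply, h]; module

theorem refl_mul_self {a : V} (h : D.B a a = 1) : D.refl a * D.refl a = 1 := by
  ext x
  simp only [Module.End.mul_apply, refl_apply, map_sub, map_smul, h, Module.End.one_apply]
  module

theorem exists_simple_val_eq {α : V} (hα : α ∈ D.Pi) :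
    ∃ s ∈ D.simples, (s : Module.End ℝ V) = D.refl α :=
  have h := D.refl_mul_self (D.norm_one α hα)
  ⟨⟨D.refl α, D.refl α, h, h⟩, ⟨α, hα, rfl⟩, rfl⟩

theorem simple_mul_self {s : (Module.End ℝ V)ˣ} (hs : s ∈ D.simples) : s * s = 1 := by
  obtain ⟨α, hα, hsα⟩ := hs
  exact Units.ext (by rw [Units.val_mul, hsα, D.refl_mul_self (D.norm_one α hα), Units.val_one])

theorem simple_inv {s : (Module.End ℝ V)ˣ} (hs : s ∈ D.simples) : s⁻¹ = s :=
  inv_eq_of_mul_eq_one_right (D.simple_mul_self hs)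

theorem simple_mem_Wgrp {s : (Module.End ℝ V)ˣ} (hs : s ∈ D.simples) : s ∈ D.Wgrp :=
  Subgroup.subset_closure hs

theorem Wgrp_induction {p : (w : (Module.End ℝ V)ˣ) → w ∈ D.Wgrp → Prop}
    (one : p 1 (one_mem _))
    (mul : ∀ s (hs : s ∈ D.simples) w (hw : w ∈ D.Wgrp), p w hw →
      p (s * w) (mul_mem (D.simple_mem_Wgrp hs) hw))
    (w : (Module.End ℝ V)ˣ) (hw : w ∈ D.Wgrp) : p w hw := by
  induction hw using Subgroup.closure_induction_left with
  | one => exact one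
  | mul_left s hs w _ ih => exact mul s hs w _ ih
  | inv_mul_cancel s hs w _ ih =>
    simp_rw [D.simple_inv hs]
    exact mul s hs w _ ih

theorem B_comm {x y : V} (hx : x ∈ Submodule.span ℝ D.Pi) (hy : y ∈ Submodule.span ℝ D.Pi) :
    D.B x y = D.B y x := by
  induction hx using Submodule.span_induction with
  | mem x hx =>
    induction hy using Submodule.span_induction with
    | mem y hy => exact D.symm x hx y hy
    | zero => simp
    | add y z _ _ hy hz => simp [hy, hz]
    | smul r y _ hy => simp [hy]
  | zero => simp
  | add x z _ _ hx hz => simp [hx, hz]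
  | smul r x _ hx => simp [hx]

theorem refl_apply_mem_span {α x : V} (hα : α ∈ D.Pi) (hx : x ∈ Submodule.span ℝ D.Pi) :
    D.refl α x ∈ Submodule.span ℝ D.Pi :=
  Submodule.sub_mem _ hx (Submodule.smul_mem _ _ (Submodule.subset_span hα))

theorem B_refl_apply_refl_apply {α : V} (hα : α ∈ D.Pi) (x : V) {y : V}
    (hy : y ∈ Submodule.span ℝ D.Pi) : D.B (D.refl α x) (D.refl α y) = D.B x y := by
  simp only [refl_apply, map_sub, map_smul, LinearMap.sub_apply, LinearMap.smul_apply,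
    smul_eq_mul, D.norm_one α hα, D.B_comm (Submodule.subset_span hα) hy]
  ring

theorem apply_mem_span {w : (Module.End ℝ V)ˣ} (hw : w ∈ D.Wgrp) {x : V}
    (hx : x ∈ Submodule.span ℝ D.Pi) : (w : Module.End ℝ V) x ∈ Submodule.span ℝ D.Pi := by
  induction w, hw using D.Wgrp_induction generalizing x with
  | one => exact hx
  | mul s hs w _ ih =>
    obtain ⟨α, hα, hsα⟩ := hs
    rw [Units.val_mul, Module.End.mul_apply, hsα]
    exact D.refl_apply_mem_span hα (ih hx)

theorem B_apply_apply {w : (Module.End ℝ V)ˣ} (hw : w ∈ D.Wgrp) (x : V) {y : V}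
    (hy : y ∈ Submodule.span ℝ D.Pi) :
    D.B ((w : Module.End ℝ V) x) ((w : Module.End ℝ V) y) = D.B x y := by
  induction w, hw using D.Wgrp_induction generalizing x y with
  | one => rfl
  | mul s hs w hw ih =>
    obtain ⟨α, hα, hsα⟩ := hs
    simp only [Units.val_mul, Module.End.mul_apply, hsα]
    rw [D.B_refl_apply_refl_apply hα _ (D.apply_mem_span hw hy), ih x hy]

theorem B_inv_apply {w : (Module.End ℝ V)ˣ} (hw : w ∈ D.Wgrp) (x : V) {y : V}
    (hy : y ∈ Submodule.span ℝ D.Pi) :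
    D.B (((w⁻¹ : (Module.End ℝ V)ˣ) : Module.End ℝ V) x) y = D.B x ((w : Module.End ℝ V) y) := by
  conv_rhs => rw [← Module.End.units_apply_inv_apply w x]
  exact (D.B_apply_apply hw _ hy).symm

theorem conj_refl {w : (Module.End ℝ V)ˣ} (hw : w ∈ D.Wgrp) {γ : V}
    (hγ : γ ∈ Submodule.span ℝ D.Pi) :
    (w : Module.End ℝ V) * D.refl γ * ((w⁻¹ : (Module.End ℝ V)ˣ) : Module.End ℝ V)
      = D.refl ((w : Module.End ℝ V) γ) := by
  ext x
  simp only [Module.End.mul_apply, refl_apply, map_sub, map_smul, D.B_inv_apply hw x hγ]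
  rw [Module.End.units_apply_inv_apply]

theorem roots_subset_span {x : V} (hx : x ∈ D.roots) : x ∈ Submodule.span ℝ D.Pi := by
  obtain ⟨w, hw, α, hα, rfl⟩ := hx
  exact D.apply_mem_span hw (Submodule.subset_span hα)

theorem B_self_of_mem_roots {x : V} (hx : x ∈ D.roots) : D.B x x = 1 := by
  obtain ⟨w, hw, α, hα, rfl⟩ := hx
  rw [D.B_apply_apply hw α (Submodule.subset_span hα), D.norm_one α hα]

theorem B_comm_of_mem_roots {x y : V} (hx : x ∈ D.roots) (hy : y ∈ D.roots) :
    D.B x y = D.B y x :=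
  D.B_comm (D.roots_subset_span hx) (D.roots_subset_span hy)

theorem apply_mem_roots {w : (Module.End ℝ V)ˣ} (hw : w ∈ D.Wgrp) {x : V} (hx : x ∈ D.roots) :
    (w : Module.End ℝ V) x ∈ D.roots := by
  obtain ⟨v, hv, α, hα, rfl⟩ := hx
  exact ⟨w * v, mul_mem hw hv, α, hα, rfl⟩

def IsWord (l : List (Module.End ℝ V)ˣ) : Prop := ∀ u ∈ l, u ∈ D.simples

variable {D}

theorem IsWord.prod_mem {l : List (Module.End ℝ V)ˣ} (hl : D.IsWord l) : l.prod ∈ D.Wgrp :=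
  D.Wgrp.list_prod_mem fun u hu => D.simple_mem_Wgrp (hl u hu)

theorem IsWord.len_prod_le {l : List (Module.End ℝ V)ˣ} (hl : D.IsWord l) :
    D.len l.prod ≤ l.length :=
  Nat.sInf_le ⟨l, rfl, hl, rfl⟩

variable (D)

theorem exists_isWord {w : (Module.End ℝ V)ˣ} (hw : w ∈ D.Wgrp) :
    ∃ l, D.IsWord l ∧ l.prod = w := by
  induction w, hw using D.Wgrp_induction with
  | one => exact ⟨[], List.forall_mem_nil _, rfl⟩
  | mul s hs w _ ih =>
    obtain ⟨l, hl, rfl⟩ := ih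
    exact ⟨s :: l, List.forall_mem_cons.2 ⟨hs, hl⟩, List.prod_cons⟩

theorem exists_reduced {w : (Module.End ℝ V)ˣ} (hw : w ∈ D.Wgrp) :
    ∃ l, D.IsWord l ∧ l.prod = w ∧ l.length = D.len w := by
  obtain ⟨l, hlen, hl, hw⟩ := Nat.sInf_mem (s := {n | ∃ l : List (Module.End ℝ V)ˣ,
    l.length = n ∧ (∀ u ∈ l, u ∈ D.simples) ∧ l.prod = w})
    (by obtain ⟨l, hl, rfl⟩ := D.exists_isWord hw; exact ⟨_, l, rfl, hl, rfl⟩)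
  exact ⟨l, hl, hw, hlen⟩

theorem len_mul_le {w v : (Module.End ℝ V)ˣ} (hw : w ∈ D.Wgrp) (hv : v ∈ D.Wgrp) :
    D.len (w * v) ≤ D.len w + D.len v := by
  obtain ⟨l, hl, rfl, hlw⟩ := D.exists_reduced hw
  obtain ⟨l', hl', rfl, hlv⟩ := D.exists_reduced hv
  have : D.IsWord (l ++ l') := List.forall_mem_append.2 ⟨hl, hl'⟩
  simpa [hlw, hlv] using this.len_prod_le

theorem len_le_len_mul_simple_add_one {w s : (Module.End ℝ V)ˣ} (hw : w ∈ D.Wgrp)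
    (hs : s ∈ D.simples) : D.len w ≤ D.len (w * s) + 1 := by
  have hs1 : D.len s ≤ 1 := by
    simpa using IsWord.len_prod_le (D := D) (List.forall_mem_singleton.2 hs)
  calc D.len w = D.len (w * s * s) := by rw [mul_assoc, D.simple_mul_self hs, mul_one]
    _ ≤ D.len (w * s) + D.len s :=
      D.len_mul_le (mul_mem hw (D.simple_mem_Wgrp hs)) (D.simple_mem_Wgrp hs)
    _ ≤ D.len (w * s) + 1 := by omega

theorem exists_descent {w : (Module.End ℝ V)ˣ} (hw : w ∈ D.Wgrp) (hne : w ≠ 1) :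
    ∃ s ∈ D.simples, D.len (w * s) < D.len w := by
  obtain ⟨l, hl, rfl, hlen⟩ := D.exists_reduced hw
  rcases l.eq_nil_or_concat' with rfl | ⟨l, s, rfl⟩
  · exact absurd List.prod_nil hne
  obtain ⟨hl, hs⟩ := List.forall_mem_append.1 hl
  replace hs : s ∈ D.simples := hs s (List.mem_singleton_self s)
  refine ⟨s, hs, ?_⟩
  rw [← hlen, List.prod_append, List.prod_singleton, mul_assoc, D.simple_mul_self hs, mul_one,
    List.length_append, List.length_singleton]
  exact Nat.lt_succ_of_le (IsWord.len_prod_le hl)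

/-! ### Roots are positive or negative -/

theorem prod_alternatingWord_apply {α β : V} (hα : α ∈ D.Pi) (hβ : β ∈ D.Pi)
    {sa sb : (Module.End ℝ V)ˣ} (hsa : (sa : Module.End ℝ V) = D.refl α)
    (hsb : (sb : Module.End ℝ V) = D.refl β) {c : ℝ} (hαβ : D.B α β = -c)
    (hβα : D.B β α = -c) (k : ℕ) :
    ((alternatingWord sa sb k).prod : Module.End ℝ V) α =
      if Even k then chebU c (k + 1) • α + chebU c k • β
      else chebU c k • α + chebU c (k + 1) • β := by
  induction k with
  | zero => simp [alternatingWord]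
  | succ k ih =>
    rw [alternatingWord_succ', List.prod_cons, Units.val_mul, Module.End.mul_apply, ih]
    by_cases hk : Even k
    · rw [if_pos hk, if_pos hk, if_neg (by simpa [parity_simps] using hk), hsb, chebU_add_two]
      simp only [refl_apply, map_add, map_smul, hαβ, D.norm_one β hβ]
      module
    · rw [if_neg hk, if_neg hk, if_pos (by simpa [parity_simps] using hk), hsa, chebU_add_two]
      simp only [refl_apply, map_add, map_smul, hβα, D.norm_one α hα]
      module

theorem pow_apply_of_cos {α β : V} (hα : α ∈ D.Pi) (hβ : β ∈ D.Pi)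
    {sa sb : (Module.End ℝ V)ˣ} (hsa : (sa : Module.End ℝ V) = D.refl α)
    (hsb : (sb : Module.End ℝ V) = D.refl β) {m : ℕ} (hm : 2 ≤ m)
    (hαβ : D.B α β = -cos (π / m)) (hβα : D.B β α = -cos (π / m)) :
    (((sa * sb) ^ m : (Module.End ℝ V)ˣ) : Module.End ℝ V) α = α := by
  obtain ⟨h0, h1⟩ := chebU_cos_pi_div_two_mul hm
  rw [← prod_alternatingWord_two_mul, D.prod_alternatingWord_apply hα hβ hsa hsb hαβ hβα,
    if_pos (even_two_mul m), h0, h1]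
  simp

theorem pow_eq_one_of_cos {α β : V} (hα : α ∈ D.Pi) (hβ : β ∈ D.Pi)
    {sa sb : (Module.End ℝ V)ˣ} (hsa : (sa : Module.End ℝ V) = D.refl α)
    (hsb : (sb : Module.End ℝ V) = D.refl β) {m : ℕ} (hm : 2 ≤ m)
    (hαβ : D.B α β = -cos (π / m)) (hβα : D.B β α = -cos (π / m)) : (sa * sb) ^ m = 1 := by
  have hinv : (sb * sa) ^ m = ((sa * sb) ^ m)⁻¹ := by
    rw [← inv_pow, mul_inv_rev, D.simple_inv ⟨α, hα, hsa⟩, D.simple_inv ⟨β, hβ, hsb⟩]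
  have hfix : ∀ v, D.B v α = 0 → D.B v β = 0 →
      ((sa * sb : (Module.End ℝ V)ˣ) : Module.End ℝ V) v = v :=
    fun v hvα hvβ => by simp [hsa, hsb, refl_apply, hvα, hvβ]
  apply Units.ext
  refine LinearMap.BilinForm.eq_one_of_apply_eq_self (D.norm_one α hα) (D.norm_one β hβ) hαβ hβα
    ?_ (D.pow_apply_of_cos hα hβ hsa hsb hm hαβ hβα) ?_ fun v hvα hvβ => ?_
  · rw [cos_sq']
    nlinarith [sin_pi_div_pos hm]
  · have h := D.pow_apply_of_cos hβ hα hsb hsa hm hβα hαβ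
    rw [hinv] at h
    conv_lhs => rw [← h, Module.End.units_apply_inv_apply]
  · rw [Units.val_pow_eq_pow_val, Module.End.pow_apply, Function.iterate_fixed (hfix v hvα hvβ)]

theorem isWord_alternatingWord {sa sb : (Module.End ℝ V)ˣ} (hsa : sa ∈ D.simples)
    (hsb : sb ∈ D.simples) (n : ℕ) : D.IsWord (alternatingWord sa sb n) := fun _ hu => by
  rcases mem_alternatingWord hu with rfl | rfl
  exacts [hsa, hsb]

theorem len_lt_len_mul_of_le {v s : (Module.End ℝ V)ˣ} (hv : v ∈ D.Wgrp) (hs : s ∈ D.simples)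
    {l : List (Module.End ℝ V)ˣ} (hl : D.IsWord l)
    (h : D.len v + (l.length + 1) ≤ D.len (v * s * l.prod)) : D.len v < D.len (v * s) := by
  have := D.len_mul_le (mul_mem hv (D.simple_mem_Wgrp hs)) hl.prod_mem
  have := hl.len_prod_le
  omega

theorem exists_alternatingWord_factorization {w sa sb : (Module.End ℝ V)ˣ} (hw : w ∈ D.Wgrp)
    (hsa : sa ∈ D.simples) (hsb : sb ∈ D.simples) (hdesc : D.len (w * sb) < D.len w) :
    ∃ n, 0 < n ∧ ∃ v ∈ D.Wgrp, w = v * (alternatingWord sa sb n).prod ∧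
      D.len v + n = D.len w ∧ D.len v ≤ D.len (v * sa) ∧ D.len v ≤ D.len (v * sb) := by
  have hx := D.isWord_alternatingWord hsa hsb
  set additive := {n | D.len (w * (alternatingWord sa sb n).prod⁻¹) + n = D.len w}
  have h1 : 1 ∈ additive := by
    have := D.len_le_len_mul_simple_add_one hw hsb
    simp only [additive, Set.mem_ofPred_eq, alternatingWord, List.concat_eq_append, List.nil_append,
      List.prod_singleton, D.simple_inv hsb]
    omega
  have hbdd : BddAbove additive := ⟨D.len w, fun n (hn : _ + n = _) => by omega⟩
  obtain ⟨n, hn⟩ : ∃ n, sSup additive = n + 1 := Nat.exists_eq_add_of_le' (le_csSup hbdd h1)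
  set v := w * (alternatingWord sa sb (n + 1)).prod⁻¹
  have hv : v ∈ D.Wgrp := mul_mem hw (inv_mem (hx _).prod_mem)
  have hvlen : D.len v + (n + 1) = D.len w := by
    have : n + 1 ∈ additive := hn ▸ Nat.sSup_mem ⟨1, h1⟩ hbdd
    exact this
  -- `s` is the first letter of the alternating word `x` with `w = v x`; `s'` would extend `x`
  set s := if Even n then sb else sa
  set s' := if Even (n + 1) then sb else sa
  have hs : s ∈ D.simples := by simp only [s]; split_ifs <;> assumption
  have hs' : s' ∈ D.simples := by simp only [s']; split_ifs <;> assumption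
  have hmax : D.len v ≤ D.len (v * s') := by
    by_contra! hlt
    have hmem : n + 2 ∈ additive := by
      have := D.len_le_len_mul_simple_add_one hv hs'
      show _ + (n + 2) = _
      rw [alternatingWord_succ', List.prod_cons, mul_inv_rev, D.simple_inv hs', ← mul_assoc]
      exact (by omega : D.len (v * s') + (n + 2) = D.len w)
    have := le_csSup hbdd hmem
    omega
  have hfirst : D.len v ≤ D.len (v * s) := by
    refine (D.len_lt_len_mul_of_le hv hs (hx n) ?_).le
    have hvs : v * s * (alternatingWord sa sb n).prod = w := by
      simp only [v, s, alternatingWord_succ', List.prod_cons]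
      group
    rw [hvs, length_alternatingWord, hvlen]
  refine ⟨n + 1, n.succ_pos, v, hv, (inv_mul_cancel_right _ _).symm, hvlen, ?_⟩
  by_cases hn : Even n
  · simp only [s, s', if_pos hn, if_neg (Nat.not_even_iff_odd.2 hn.add_one)] at hmax hfirst
    exact ⟨hmax, hfirst⟩
  · simp only [s, s', if_neg hn, if_pos (Nat.not_even_iff_odd.1 hn).add_one] at hmax hfirst
    exact ⟨hfirst, hmax⟩

theorem len_mul_prod_alternatingWord_mul_lt {v sa sb : (Module.End ℝ V)ˣ} (hv : v ∈ D.Wgrp)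
    (hsa : sa ∈ D.simples) (hsb : sb ∈ D.simples) {m n : ℕ} (hm : (sb * sa) ^ m = 1)
    (hm0 : 0 < m) (hmn : m ≤ n) :
    D.len (v * (alternatingWord sa sb n).prod * sa) < D.len v + n := by
  obtain ⟨y, hy, hprod, hlen⟩ := exists_shorter_alternatingWord (D.simple_mul_self hsb)
    (D.simple_mul_self hsa) hm hm0 (Nat.lt_succ_of_le hmn)
  have hyW : D.IsWord y := fun u hu => by rcases hy u hu with rfl | rfl <;> assumption
  rw [alternatingWord_succ, List.concat_eq_append, List.prod_append, List.prod_singleton] at hprod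
  rw [mul_assoc, ← hprod]
  have := D.len_mul_le hv hyW.prod_mem
  have := hyW.len_prod_le
  omega

theorem exists_chebU_pos {α β : V} (hα : α ∈ D.Pi) (hβ : β ∈ D.Pi) (hαβ : α ≠ β) {n : ℕ}
    (hn : 0 < n) (hfin : ∀ m : ℕ, 2 ≤ m → D.B α β = -cos (π / m) → n < m) :
    ∃ c, D.B α β = -c ∧ D.B β α = -c ∧ 0 < chebU c n ∧ 0 ≤ chebU c (n + 1) := by
  rw [D.symm β hβ α hα]
  rcases D.offdiag α hα β hβ hαβ with ⟨m, hm, hcos⟩ | hle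
  · have := hfin m hm hcos
    exact ⟨_, hcos, hcos, chebU_cos_pi_div_pos hn this, chebU_cos_pi_div_nonneg hm this⟩
  · have hc : 1 ≤ -D.B α β := by linarith
    exact ⟨_, (neg_neg _).symm, (neg_neg _).symm, one_pos.trans_le (one_le_chebU hc hn),
      zero_le_one.trans (one_le_chebU hc n.succ_pos)⟩

theorem apply_mem_PLC_of_len_le {w : (Module.End ℝ V)ˣ} (hw : w ∈ D.Wgrp) {α : V}
    (hα : α ∈ D.Pi) {sa : (Module.End ℝ V)ˣ} (hsa : (sa : Module.End ℝ V) = D.refl α)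
    (hlen : D.len w ≤ D.len (w * sa)) : (w : Module.End ℝ V) α ∈ PLC D.Pi := by
  induction hN : D.len w using Nat.strong_induction_on generalizing w α sa with
  | _ N ih =>
  subst hN
  have hsaS : sa ∈ D.simples := ⟨α, hα, hsa⟩
  by_cases hw1 : w = 1
  · simpa [hw1] using PLC.of_mem hα
  obtain ⟨sb, ⟨β, hβ, hsb⟩, hdesc⟩ := D.exists_descent hw hw1
  have hαβ : α ≠ β := by
    rintro rfl
    rw [show sa = sb from Units.ext (hsa.trans hsb.symm)] at hlen
    omega
  obtain ⟨n, hn, v, hv, rfl, hvlen, hva, hvb⟩ :=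
    D.exists_alternatingWord_factorization hw hsaS ⟨β, hβ, hsb⟩ hdesc
  -- for `n ≥ m`, the braid relation of order `m` would shorten `x s_α`
  have hfin : ∀ m : ℕ, 2 ≤ m → D.B α β = -cos (π / m) → n < m := by
    intro m hm hcos
    by_contra! hnm
    have := D.len_mul_prod_alternatingWord_mul_lt hv hsaS ⟨β, hβ, hsb⟩
      (D.pow_eq_one_of_cos hβ hα hsb hsa hm ((D.symm β hβ α hα).trans hcos) hcos) (by omega) hnm
    omega
  obtain ⟨c, hαβc, hβαc, hpos, hnonneg⟩ := D.exists_chebU_pos hα hβ hαβ hn hfin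
  have hvα := ih _ (by omega) hv hα hsa hva rfl
  have hvβ := ih _ (by omega) hv hβ hsb hvb rfl
  rw [Units.val_mul, Module.End.mul_apply, D.prod_alternatingWord_apply hα hβ hsa hsb hαβc hβαc]
  split_ifs
  · rw [map_add, map_smul, map_smul]
    exact PLC.smul_add_smul hvα hvβ hnonneg hpos.le (Or.inr hpos)
  · rw [map_add, map_smul, map_smul]
    exact PLC.smul_add_smul hvα hvβ hpos.le hnonneg (Or.inl hpos)

theorem mem_posRoots_or_mem_negRoots {x : V} (hx : x ∈ D.roots) :
    x ∈ D.posRoots ∨ x ∈ D.negRoots := by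
  obtain ⟨w, hw, α, hα, rfl⟩ := hx
  obtain ⟨s, hs, hsα⟩ := D.exists_simple_val_eq hα
  rcases le_or_gt (D.len w) (D.len (w * s)) with h | h
  · exact Or.inl ⟨⟨w, hw, α, hα, rfl⟩, D.apply_mem_PLC_of_len_le hw hα hsα h⟩
  · have hws : w * s ∈ D.Wgrp := mul_mem hw (D.simple_mem_Wgrp hs)
    have hwsα : ((w * s : (Module.End ℝ V)ˣ) : Module.End ℝ V) α = -(w : Module.End ℝ V) α := by
      rw [Units.val_mul, Module.End.mul_apply, hsα, D.refl_self (D.norm_one α hα), map_neg]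
    have hle : D.len (w * s) ≤ D.len (w * s * s) := by
      rw [mul_assoc, D.simple_mul_self hs, mul_one]; exact h.le
    refine Or.inr ⟨⟨w * s, hws, α, hα, hwsα.symm⟩, ?_⟩
    rw [← hwsα]
    exact D.apply_mem_PLC_of_len_le hws hα hsα hle

theorem B_nonpos_of_ne {α x : V} (hα : α ∈ D.Pi) (hx : x ∈ D.Pi) (hne : α ≠ x) :
    D.B α x ≤ 0 := by
  rcases D.offdiag α hα x hx hne with ⟨m, hm, h⟩ | h
  · rw [h, neg_nonpos]
    have hm' : (2 : ℝ) ≤ m := by exact_mod_cast hm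
    apply cos_nonneg_of_mem_Icc
    constructor
    · have : 0 < π / m := by positivity
      linarith [pi_pos]
    · exact div_le_div_of_nonneg_left pi_pos.le two_pos hm'
  · linarith

theorem linearCombination_ne_smul {α : V} (hα : α ∈ D.Pi) {e : V →₀ ℝ} (he : 0 ≤ e)
    (he0 : e ≠ 0) (hsupp : ↑e.support ⊆ D.Pi) (hαe : α ∉ e.support) (r : ℝ) :
    Finsupp.linearCombination ℝ id e ≠ r • α := by
  classical
  intro hr
  rcases le_or_gt r 0 with hr0 | hr0
  · have hs : 0 ≤ Finsupp.single α (-r) := Finsupp.single_nonneg.2 (neg_nonneg.2 hr0)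
    refine D.zero_not_plc (PLC.mem_iff_finsupp.2 ⟨e + Finsupp.single α (-r), ?_,
      add_nonneg he hs, fun h => he0 ((add_eq_zero_iff_of_nonneg he hs).1 h).1, ?_⟩)
    · refine (Finset.coe_subset.2 Finsupp.support_add).trans ?_
      simp only [Finset.coe_union, Set.union_subset_iff]
      exact ⟨hsupp, (Finset.coe_subset.2 Finsupp.support_single_subset).trans (by simpa using hα)⟩
    · rw [map_add, hr, Finsupp.linearCombination_single, id, neg_smul, add_neg_cancel]
  · have h : D.B α (Finsupp.linearCombination ℝ id e) ≤ 0 := by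
      rw [Finsupp.linearCombination_apply, Finsupp.sum, map_sum]
      refine Finset.sum_nonpos fun x hx => ?_
      rw [map_smul, smul_eq_mul, id]
      exact mul_nonpos_of_nonneg_of_nonpos (he x)
        (D.B_nonpos_of_ne hα (hsupp hx) fun h => hαe (h ▸ hx))
    rw [hr, map_smul, smul_eq_mul, D.norm_one α hα, mul_one] at h
    linarith

theorem eq_of_refl_apply_mem_negRoots {α γ : V} (hα : α ∈ D.Pi) (hγ : γ ∈ D.posRoots)
    (hneg : D.refl α γ ∈ D.negRoots) : γ = α := by
  classical
  obtain ⟨f, hfA, hf, -, hfγ⟩ := PLC.mem_iff_finsupp.1 hγ.2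
  obtain ⟨g, hgA, hg, -, hgγ⟩ := PLC.mem_iff_finsupp.1 hneg.2
  have hsplit : ∀ F : V →₀ ℝ, Finsupp.linearCombination ℝ id F =
      Finsupp.linearCombination ℝ id (F.erase α) + F α • α := fun F => by
    conv_lhs => rw [← Finsupp.erase_add_single α F]
    rw [map_add, Finsupp.linearCombination_single, id]
  by_cases hfα : f.erase α = 0
  · have hγα : γ = f α • α := by rw [← hfγ, hsplit, hfα, map_zero, zero_add]
    have h1 := D.B_self_of_mem_roots hγ.1
    rw [hγα, map_smul, map_smul, LinearMap.smul_apply, D.norm_one α hα, smul_eq_mul,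
      smul_eq_mul, mul_one] at h1
    have hfα0 : 0 ≤ f α := hf α
    rw [hγα, (mul_self_eq_one_iff.1 h1).resolve_right (by linarith), one_smul]
  -- `γ - s_α γ = 2 (γ, α) α`, but the part of its nonnegative expansion `f + g` off `α` is nonzero
  refine absurd ?_ (D.linearCombination_ne_smul hα (Finsupp.erase_nonneg (add_nonneg hf hg) α)
    ?_ ?_ (by simp) (2 * D.B γ α - (f + g) α))
  · have h : Finsupp.linearCombination ℝ id (f + g) = (2 * D.B γ α) • α := by
      rw [map_add, hfγ, hgγ, refl_apply]; module
    rw [hsplit] at h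
    rw [sub_smul, ← h]
    abel
  · rw [Finsupp.erase_add]
    exact fun h => hfα ((add_eq_zero_iff_of_nonneg (Finsupp.erase_nonneg hf α)
      (Finsupp.erase_nonneg hg α)).1 h).1
  · exact (Finset.coe_subset.2 (Finsupp.support_erase.trans_subset
      (Finset.erase_subset _ _ |>.trans Finsupp.support_add))).trans (by simp [hfA, hgA])

/-! ### The exchange condition and canonical generators -/

theorem exists_isWord_prod_mul_refl {l : List (Module.End ℝ V)ˣ} (hl : D.IsWord l) {γ : V}
    (hγ : γ ∈ D.posRoots) {t : (Module.End ℝ V)ˣ} (ht : (t : Module.End ℝ V) = D.refl γ)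
    (hneg : (l.prod : Module.End ℝ V) γ ∈ D.negRoots) :
    ∃ l', D.IsWord l' ∧ l'.prod = l.prod * t ∧ l'.length + 1 = l.length := by
  induction l with
  | nil => exact absurd hneg (D.notMem_negRoots hγ)
  | cons s l ih =>
    obtain ⟨hs, hl : D.IsWord l⟩ := List.forall_mem_cons.1 hl
    by_cases h : (l.prod : Module.End ℝ V) γ ∈ D.negRoots
    · obtain ⟨l', hl', hprod, hlen⟩ := ih hl h
      exact ⟨s :: l', List.forall_mem_cons.2 ⟨hs, hl'⟩,
        by rw [List.prod_cons, List.prod_cons, hprod, mul_assoc], by simp [hlen]⟩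
    have hpos : (l.prod : Module.End ℝ V) γ ∈ D.posRoots :=
      (D.mem_posRoots_or_mem_negRoots (D.apply_mem_roots hl.prod_mem hγ.1)).resolve_right h
    obtain ⟨α, hα, hsα⟩ := hs
    have hα' : (l.prod : Module.End ℝ V) γ = α := D.eq_of_refl_apply_mem_negRoots hα hpos
      (by rwa [List.prod_cons, Units.val_mul, Module.End.mul_apply, hsα] at hneg)
    have hconj : l.prod * t = s * l.prod := by
      rw [← mul_inv_eq_iff_eq_mul]
      apply Units.ext
      rw [Units.val_mul, Units.val_mul, ht, D.conj_refl hl.prod_mem (D.roots_subset_span hγ.1),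
        hα', hsα]
    refine ⟨l, hl, ?_, rfl⟩
    rw [List.prod_cons, mul_assoc, hconj, ← mul_assoc, D.simple_mul_self ⟨α, hα, hsα⟩, one_mul]

theorem len_mul_lt_of_apply_mem_negRoots {w : (Module.End ℝ V)ˣ} (hw : w ∈ D.Wgrp) {γ : V}
    (hγ : γ ∈ D.posRoots) {t : (Module.End ℝ V)ˣ} (ht : (t : Module.End ℝ V) = D.refl γ)
    (hneg : (w : Module.End ℝ V) γ ∈ D.negRoots) : D.len (w * t) < D.len w := by
  obtain ⟨l, hl, rfl, hlen⟩ := D.exists_reduced hw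
  obtain ⟨l', hl', hprod, hlen'⟩ := D.exists_isWord_prod_mul_refl hl hγ ht hneg
  have := hl'.len_prod_le
  rw [hprod] at this
  omega

theorem mem_Wgrp_of_mem_TSet {t : (Module.End ℝ V)ˣ} (ht : t ∈ D.TSet) : t ∈ D.Wgrp := by
  obtain ⟨w, hw, s, hs, rfl⟩ := ht
  exact mul_mem (mul_mem hw (D.simple_mem_Wgrp hs)) (inv_mem hw)

theorem exists_posRoots_of_mem_TSet {t : (Module.End ℝ V)ˣ} (ht : t ∈ D.TSet) :
    ∃ γ ∈ D.posRoots, (t : Module.End ℝ V) = D.refl γ := by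
  obtain ⟨w, hw, s, ⟨α, hα, hsα⟩, rfl⟩ := ht
  have hroot : (w : Module.End ℝ V) α ∈ D.roots := ⟨w, hw, α, hα, rfl⟩
  have hconj : ((w * s * w⁻¹ : (Module.End ℝ V)ˣ) : Module.End ℝ V) =
      D.refl ((w : Module.End ℝ V) α) := by
    rw [Units.val_mul, Units.val_mul, hsα, D.conj_refl hw (Submodule.subset_span hα)]
  rcases D.mem_posRoots_or_mem_negRoots hroot with h | h
  · exact ⟨_, h, hconj⟩
  · exact ⟨_, h, hconj.trans (D.refl_neg _).symm⟩

theorem B_le_neg_one_of_refl_apply_mem_PLC {x y : V} (hx : x ∈ PLC D.Pi) (hy : y ∈ PLC D.Pi)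
    (hyx : D.B y x = D.B x y) (hsq : 1 ≤ D.B x y ^ 2) (hxy' : D.refl x y ∈ PLC D.Pi)
    (hyx' : D.refl y x ∈ PLC D.Pi) : D.B x y ≤ -1 := by
  by_contra! h
  have h1 : 1 ≤ D.B x y := by nlinarith
  apply D.zero_not_plc
  have hz : D.refl x y + D.refl y x + (2 * D.B x y - 1) • (x + y) = 0 := by
    rw [refl_apply, refl_apply, hyx]; module
  rw [← hz]
  exact PLC.add (PLC.add hxy' hyx') (PLC.smul (by linarith) (PLC.add hx hy))

theorem mem_of_mem_canGens {W' : Subgroup (Module.End ℝ V)ˣ} {t : (Module.End ℝ V)ˣ}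
    (ht : t ∈ D.canGens W') : t ∈ W' :=
  (ht.2.symm ▸ Set.mem_singleton t : t ∈ D.Nbar t ∩ W').2

theorem refl_apply_mem_PLC_of_mem_canGens {W' : Subgroup (Module.End ℝ V)ˣ}
    {t t' : (Module.End ℝ V)ˣ} (ht : t ∈ D.canGens W') (ht' : t' ∈ D.canGens W') (hne : t ≠ t')
    {γ γ' : V} (hγ' : γ' ∈ D.posRoots) (htγ : (t : Module.End ℝ V) = D.refl γ)
    (ht'γ' : (t' : Module.End ℝ V) = D.refl γ') : D.refl γ γ' ∈ PLC D.Pi := by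
  have hnot : ¬ D.len (t * t') < D.len t := fun hlt => by
    have h : t' ∈ D.Nbar t ∩ W' := ⟨⟨ht'.1, hlt⟩, D.mem_of_mem_canGens ht'⟩
    rw [ht.2] at h
    exact hne h.symm
  have hW := D.mem_Wgrp_of_mem_TSet ht.1
  rcases D.mem_posRoots_or_mem_negRoots (D.apply_mem_roots hW hγ'.1) with h | h
  · rw [← htγ]; exact h.2
  · exact absurd (D.len_mul_lt_of_apply_mem_negRoots hW hγ' ht'γ' h) hnot

theorem mem_span_pair_of_mem_closure {a b : V} {ua ub : (Module.End ℝ V)ˣ}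
    (hua : (ua : Module.End ℝ V) = D.refl a) (hub : (ub : Module.End ℝ V) = D.refl b)
    {t : (Module.End ℝ V)ˣ} (ht : t ∈ Subgroup.closure {ua, ub}) {γ : V} (hγ : D.B γ γ = 1)
    (htγ : (t : Module.End ℝ V) = D.refl γ) : γ ∈ Submodule.span ℝ {a, b} := by
  have hS : ∀ s ∈ ({ua, ub} : Set (Module.End ℝ V)ˣ), ∀ x,
      (s : Module.End ℝ V) x - x ∈ Submodule.span ℝ {a, b} := by
    rintro s (rfl | rfl) x <;> simp only [hua, hub, refl_apply, sub_sub_cancel_left] <;>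
      exact Submodule.neg_mem _ (Submodule.smul_mem _ _ (Submodule.subset_span (by simp)))
  have h := apply_sub_mem_of_mem_closure hS ht γ
  rw [htγ, D.refl_self hγ] at h
  rw [show γ = (-(1 / 2) : ℝ) • (-γ - γ) by module]
  exact Submodule.smul_mem _ _ h

theorem B_le_neg_one_of_mem_canGens {a b : V} (ha : a ∈ D.roots) (hb : b ∈ D.roots)
    (hab : D.B a b ≤ -1) {W' : Subgroup (Module.End ℝ V)ˣ} {t t' : (Module.End ℝ V)ˣ}
    (ht : t ∈ D.canGens W') (ht' : t' ∈ D.canGens W') (hne : t ≠ t') {γ γ' : V}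
    (hγ : γ ∈ D.posRoots) (hγ' : γ' ∈ D.posRoots) (htγ : (t : Module.End ℝ V) = D.refl γ)
    (ht'γ' : (t' : Module.End ℝ V) = D.refl γ') (hγP : γ ∈ Submodule.span ℝ {a, b})
    (hγ'P : γ' ∈ Submodule.span ℝ {a, b}) : D.B γ γ' ≤ -1 :=
  D.B_le_neg_one_of_refl_apply_mem_PLC hγ.2 hγ'.2 (D.B_comm_of_mem_roots hγ'.1 hγ.1)
    (LinearMap.BilinForm.one_le_sq_of_mem_span_pair (D.B_self_of_mem_roots ha)
      (D.B_self_of_mem_roots hb) (D.B_comm_of_mem_roots hb ha) hab hγP hγ'P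
      (D.B_self_of_mem_roots hγ.1) (D.B_self_of_mem_roots hγ'.1))
    (D.refl_apply_mem_PLC_of_mem_canGens ht ht' hne hγ' htγ ht'γ')
    (D.refl_apply_mem_PLC_of_mem_canGens ht' ht hne.symm hγ ht'γ' htγ)

end CoxeterDatum

theorem canGens_of_dihedral_reflection_subgroup_general (D : CoxeterDatum V) {a b : V}
    (ha : a ∈ D.posRoots) (hb : b ∈ D.posRoots) (hab : D.B a b ≤ -1)
    (ua ub : (Module.End ℝ V)ˣ)
    (hua : (ua : Module.End ℝ V) = D.refl a) (hub : (ub : Module.End ℝ V) = D.refl b)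
    (W' : Subgroup (Module.End ℝ V)ˣ)
    (hle : W' ≤ Subgroup.closure {ua, ub}) :
    (D.canGens W').Finite ∧ (D.canGens W').ncard ≤ 2 := by
  have hroot : ∀ t ∈ D.canGens W', ∃ γ ∈ D.posRoots,
      (t : Module.End ℝ V) = D.refl γ ∧ γ ∈ Submodule.span ℝ {a, b} := fun t ht => by
    obtain ⟨γ, hγ, htγ⟩ := D.exists_posRoots_of_mem_TSet ht.1
    exact ⟨γ, hγ, htγ, D.mem_span_pair_of_mem_closure hua hub (hle (D.mem_of_mem_canGens ht))
      (D.B_self_of_mem_roots hγ.1) htγ⟩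
  choose! γ hγ htγ hγP using hroot
  have hB : ∀ t ∈ D.canGens W', ∀ t' ∈ D.canGens W', t ≠ t' → D.B (γ t) (γ t') ≤ -1 :=
    fun t ht t' ht' hne => D.B_le_neg_one_of_mem_canGens ha.1 hb.1 hab ht ht' hne (hγ t ht)
      (hγ t' ht') (htγ t ht) (htγ t' ht') (hγP t ht) (hγP t' ht')
  refine Set.finite_and_ncard_le_two_of_forall_not_injective fun T hT hinj =>
    not_linearIndependent_of_mem_span_pair (fun i => hγP _ (hT i)) ?_
  exact LinearMap.BilinForm.linearIndependent_of_le_neg_one (v := γ ∘ T)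
    (fun i => D.B_self_of_mem_roots (hγ _ (hT i)).1)
    fun i j hij => hB _ (hT i) _ (hT j) (hinj.ne hij)

/-- Proposition 1.8. Any reflection subgroup of an infinite dihedral reflection
subgroup `⟨r_a, r_b⟩` (with `(a,b) ≤ -1`) has at most 2 canonical generators. -/
theorem canGens_of_dihedral_reflection_subgroup (D : CoxeterDatum V) {a b : V}
    (ha : a ∈ D.posRoots) (hb : b ∈ D.posRoots) (hab : D.B a b ≤ -1)
    (ua ub : (Module.End ℝ V)ˣ)
    (hua : (ua : Module.End ℝ V) = D.refl a) (hub : (ub : Module.End ℝ V) = D.refl b)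
    (W' : Subgroup (Module.End ℝ V)ˣ)
    (hle : W' ≤ Subgroup.closure {ua, ub})
    (hrefl : W' = Subgroup.closure ((W' : Set (Module.End ℝ V)ˣ) ∩ D.TSet)) :
    (D.canGens W').Finite ∧ (D.canGens W').ncard ≤ 2 :=
  canGens_of_dihedral_reflection_subgroup_general D ha hb hab ua ub hua hub W' hle
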